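/- arXiv:0904.2933 — 2 statements merged into one kernel-verified Lean document; each statement's English description precedes it below -/
import Mathlib

section
/- Let c > 0, m₀ > 0, let ψ : ℝ × ℝ³ → ℝ be a C¹ function, and define μ = −ψ/(m₀²c²) and the mass function m̃₀ = m₀·exp(μ). Let r : ℝ → ℝ³ be a twice differentiable curve with |dr/dt| > c everywhere, write v = dr/dt, Γ(t) = 1/√(|v(t)|²/c² − 1), and let F_L : ℝ → ℝ³ be any continuous function (the Lorentz force along the curve). Then the following two equations are equivalent (one holds for all t if and only if the other does): (i) (d/dt)(m₀ Γ v) = F_L + (1/(m₀c²)) Γ v (dψ/dt) − (1/m₀)√(v²/c² − 1)·(grad ψ)(t, r(t)), where dψ/dt = ⟨v, grad ψ⟩ + ∂ψ/∂t evaluated at (t, r(t)); (ii) (d/dt)(m̃₀(t,r(t)) Γ v) = (m̃₀(t,r(t))/m₀)·F_L + c²√(v²/c² − 1)·(grad m̃₀)(t, r(t)), where grad denotes the spatial gradient. In particular, for tachyons the Dicke force takes the form F_D = c²√(v²/c² − 1)·grad m̃₀. -/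
/-- Spatial partial derivative `∂f/∂x^i` of a field on `ℝ × ℝ³`. -/
noncomputable def pdx (f : ℝ × (Fin 3 → ℝ) → ℝ) (i : Fin 3) (t : ℝ) (x : Fin 3 → ℝ) : ℝ :=
  fderiv ℝ (fun y => f (t, y)) x (Pi.single i 1)

/-- Time partial derivative `∂f/∂t` of a field on `ℝ × ℝ³`. -/
noncomputable def pdt (f : ℝ × (Fin 3 → ℝ) → ℝ) (t : ℝ) (x : Fin 3 → ℝ) : ℝ :=
  deriv (fun τ => f (τ, x)) t

/-- Component `l` of the velocity of a curve in `ℝ³`. -/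
noncomputable def v3 (r : ℝ → Fin 3 → ℝ) (l : Fin 3) (t : ℝ) : ℝ :=
  deriv (fun τ => r τ l) t

/-!
With `M(t) = m₀ exp μ(t, r t)` one has `dM/dt = M · dμ/dt` and `grad m̃₀ = m̃₀ · grad μ`, where
`μ = -ψ/(m₀²c²)`. Expanding `d/dt (M Γ v)` by the product rule, equation (ii) at each time and
component becomes exactly `exp μ` times equation (i), and `exp μ ≠ 0`.
-/

open Real

section PartialDerivatives

variable {f : ℝ × (Fin 3 → ℝ) → ℝ} {t : ℝ} {x : Fin 3 → ℝ}

lemma pdt_eq_fderiv (hf : DifferentiableAt ℝ f (t, x)) :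
    pdt f t x = fderiv ℝ f (t, x) (1, 0) :=
  (hf.hasFDerivAt.comp_hasDerivAt t
    ((hasDerivAt_id t).prodMk (hasDerivAt_const t x))).deriv

lemma pdx_eq_fderiv (hf : DifferentiableAt ℝ f (t, x)) (i : Fin 3) :
    pdx f i t x = fderiv ℝ f (t, x) (0, Pi.single i 1) :=
  congrArg (· (Pi.single i 1))
    (hf.hasFDerivAt.comp x (hasFDerivAt_prodMk_right t x)).fderiv

lemma pdx_comp {g : ℝ → ℝ} {g' : ℝ} (hg : HasDerivAt g g' (f (t, x)))
    (hf : DifferentiableAt ℝ (fun y => f (t, y)) x) (i : Fin 3) :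
    pdx (fun p => g (f p)) i t x = g' * pdx f i t x :=
  congrArg (· (Pi.single i 1)) (hg.comp_hasFDerivAt x hf.hasFDerivAt).fderiv

lemma hasDerivAt_comp_curve {r : ℝ → Fin 3 → ℝ} (hf : DifferentiableAt ℝ f (t, r t))
    (hr : ∀ l, DifferentiableAt ℝ (fun τ => r τ l) t) :
    HasDerivAt (fun τ => f (τ, r τ))
      ((∑ p, v3 r p t * pdx f p t (r t)) + pdt f t (r t)) t := by
  have hcurve : HasDerivAt (fun τ => (τ, r τ)) ((1 : ℝ), fun l => v3 r l t) t :=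
    (hasDerivAt_id t).prodMk (hasDerivAt_pi.2 fun l => (hr l).hasDerivAt)
  refine (hf.hasFDerivAt.comp_hasDerivAt t hcurve).congr_deriv ?_
  set L := fderiv ℝ f (t, r t)
  have hsplit : ((1 : ℝ), fun l => v3 r l t) = (1, 0) + ∑ p, v3 r p t • (0, Pi.single p 1) := by
    ext <;> simp [Prod.fst_sum, Prod.snd_sum, Finset.sum_apply, Pi.single_apply]
  simp only [hsplit, map_add, map_sum, map_smul, smul_eq_mul, pdt_eq_fderiv hf, pdx_eq_fderiv hf, L]
  ring

end PartialDerivatives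

lemma hasDerivAt_const_mul_exp_neg_div (m k s : ℝ) :
    HasDerivAt (fun s => m * exp (-s / k)) (m * exp (-s / k) * (-1 / k)) s := by
  refine (((hasDerivAt_neg s).div_const k).exp.const_mul m).congr_deriv ?_
  ring

lemma deriv_mul_div {M a b : ℝ → ℝ} {M' t : ℝ} (hM : HasDerivAt M M' t)
    (hab : DifferentiableAt ℝ (fun τ => a τ / b τ) t) :
    deriv (fun τ => M τ * a τ / b τ) t = M' * (a t / b t) + M t * deriv (fun τ => a τ / b τ) t := by
  simp only [mul_div_assoc]
  exact (hM.mul hab.hasDerivAt).deriv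

lemma sub_one_pos_of_lt_sqrt {c s : ℝ} (hc : 0 < c) (hs : c < √s) : 0 < s / c ^ 2 - 1 := by
  rw [sub_pos, one_lt_div (by positivity)]
  exact (lt_sqrt hc.le).1 hs

-- Equations (i) and (ii) in the shape `deriv_mul_div` produces, with `E = exp μ`.
lemma dicke_form_iff {m₀ c g E A F D P v : ℝ} (hm : m₀ ≠ 0) (hc : c ≠ 0) (hg : g ≠ 0)
    (hE : E ≠ 0) :
    0 * (v / g) + m₀ * A = F + 1 / (m₀ * c ^ 2) * (1 / g) * v * D - 1 / m₀ * g * P ↔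
      m₀ * E * (-1 / (m₀ ^ 2 * c ^ 2)) * D * (v / g) + m₀ * E * A =
        m₀ * E / m₀ * F + c ^ 2 * g * (m₀ * E * (-1 / (m₀ ^ 2 * c ^ 2)) * P) := by
  have key : m₀ * E * (-1 / (m₀ ^ 2 * c ^ 2)) * D * (v / g) + m₀ * E * A -
      (m₀ * E / m₀ * F + c ^ 2 * g * (m₀ * E * (-1 / (m₀ ^ 2 * c ^ 2)) * P)) =
      E * (0 * (v / g) + m₀ * A - (F + 1 / (m₀ * c ^ 2) * (1 / g) * v * D - 1 / m₀ * g * P)) := by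
    field_simp
    ring
  rw [← sub_eq_zero, ← sub_eq_zero (a := _ + _), key, mul_eq_zero, or_iff_right hE]

theorem stmt11_general (c m₀ : ℝ) (hc : 0 < c) (hm : 0 < m₀)
    (ψ : ℝ × (Fin 3 → ℝ) → ℝ) (hψ : ContDiff ℝ 1 ψ)
    (mt : ℝ × (Fin 3 → ℝ) → ℝ)
    (hmt : ∀ p, mt p = m₀ * Real.exp (-ψ p / (m₀ ^ 2 * c ^ 2)))
    (r : ℝ → Fin 3 → ℝ)
    (hr1 : ∀ l, Differentiable ℝ fun t => r t l)
    (hr2 : ∀ l, Differentiable ℝ (v3 r l))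
    (hsup : ∀ t, c < Real.sqrt (∑ p, v3 r p t ^ 2))
    (FL : ℝ → Fin 3 → ℝ) :
    (∀ t, ∀ l : Fin 3,
        deriv (fun τ => m₀ * v3 r l τ /
            Real.sqrt ((∑ p, v3 r p τ ^ 2) / c ^ 2 - 1)) t =
          FL t l
          + (1 / (m₀ * c ^ 2)) *
              (1 / Real.sqrt ((∑ p, v3 r p t ^ 2) / c ^ 2 - 1)) * v3 r l t *
              ((∑ p, v3 r p t * pdx ψ p t (r t)) + pdt ψ t (r t))
          - (1 / m₀) * Real.sqrt ((∑ p, v3 r p t ^ 2) / c ^ 2 - 1) *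
              pdx ψ l t (r t))
    ↔
    (∀ t, ∀ l : Fin 3,
        deriv (fun τ => mt (τ, r τ) * v3 r l τ /
            Real.sqrt ((∑ p, v3 r p τ ^ 2) / c ^ 2 - 1)) t =
          mt (t, r t) / m₀ * FL t l
          + c ^ 2 * Real.sqrt ((∑ p, v3 r p t ^ 2) / c ^ 2 - 1) *
              pdx mt l t (r t)) := by
  obtain rfl : mt = fun p => m₀ * exp (-ψ p / (m₀ ^ 2 * c ^ 2)) := funext hmt
  have hψd : Differentiable ℝ ψ := hψ.differentiable one_ne_zero
  refine forall_congr' fun t => forall_congr' fun l => ?_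
  have hrad := sub_one_pos_of_lt_sqrt hc (hsup t)
  have hΓ : 0 < √((∑ p, v3 r p t ^ 2) / c ^ 2 - 1) := sqrt_pos.2 hrad
  have hu : DifferentiableAt ℝ (fun τ => v3 r l τ / √((∑ p, v3 r p τ ^ 2) / c ^ 2 - 1)) t := by
    refine (hr2 l t).div (DifferentiableAt.sqrt ?_ hrad.ne') hΓ.ne'
    fun_prop
  have hmass : HasDerivAt (fun τ => m₀ * exp (-ψ (τ, r τ) / (m₀ ^ 2 * c ^ 2))) _ t :=
    (hasDerivAt_const_mul_exp_neg_div m₀ (m₀ ^ 2 * c ^ 2) _).comp t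
      (hasDerivAt_comp_curve (hψd _) fun l => hr1 l t)
  beta_reduce
  rw [deriv_mul_div (hasDerivAt_const t m₀) hu, deriv_mul_div hmass hu,
    pdx_comp (hasDerivAt_const_mul_exp_neg_div _ _ _) (by fun_prop)]
  exact dicke_form_iff hm.ne' hc.ne' hΓ.ne' (exp_pos _).ne'

/-- for tachyons, with the mass function `m̃₀ = m₀·exp(−ψ/(m₀²c²))`,
the equation of motion `(d/dt)(m₀Γv) = F_L + F_C − (1/m₀)√(v²/c²−1)·grad ψ` is
equivalent to `(d/dt)(m̃₀Γv) = (m̃₀/m₀)·F_L + c²√(v²/c²−1)·grad m̃₀`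
(Dicke force form). -/
theorem stmt11 (c m₀ : ℝ) (hc : 0 < c) (hm : 0 < m₀)
    (ψ : ℝ × (Fin 3 → ℝ) → ℝ) (hψ : ContDiff ℝ 1 ψ)
    (mt : ℝ × (Fin 3 → ℝ) → ℝ)
    (hmt : ∀ p, mt p = m₀ * Real.exp (-ψ p / (m₀ ^ 2 * c ^ 2)))
    (r : ℝ → Fin 3 → ℝ)
    (hr1 : ∀ l, Differentiable ℝ fun t => r t l)
    (hr2 : ∀ l, Differentiable ℝ (v3 r l))
    (hsup : ∀ t, c < Real.sqrt (∑ p, v3 r p t ^ 2))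
    (FL : ℝ → Fin 3 → ℝ) (hFL : Continuous FL) :
    (∀ t, ∀ l : Fin 3,
        deriv (fun τ => m₀ * v3 r l τ /
            Real.sqrt ((∑ p, v3 r p τ ^ 2) / c ^ 2 - 1)) t =
          FL t l
          + (1 / (m₀ * c ^ 2)) *
              (1 / Real.sqrt ((∑ p, v3 r p t ^ 2) / c ^ 2 - 1)) * v3 r l t *
              ((∑ p, v3 r p t * pdx ψ p t (r t)) + pdt ψ t (r t))
          - (1 / m₀) * Real.sqrt ((∑ p, v3 r p t ^ 2) / c ^ 2 - 1) *
              pdx ψ l t (r t))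
    ↔
    (∀ t, ∀ l : Fin 3,
        deriv (fun τ => mt (τ, r τ) * v3 r l τ /
            Real.sqrt ((∑ p, v3 r p τ ^ 2) / c ^ 2 - 1)) t =
          mt (t, r t) / m₀ * FL t l
          + c ^ 2 * Real.sqrt ((∑ p, v3 r p t ^ 2) / c ^ 2 - 1) *
              pdx mt l t (r t)) :=
  stmt11_general c m₀ hc hm ψ hψ mt hmt r hr1 hr2 hsup FL
end

section
/- Let c > 0, e ∈ ℝ, let A : ℝ × ℝ³ → ℝ³, V : ℝ × ℝ³ → ℝ and ψ : ℝ × ℝ³ → ℝ be C¹ fields, and set φ_l(t,x) = (e/c)A^l(t,x) for l = 1,2,3 and φ_4(t,x) = −(e/c)V(t,x). Let t : ℝ → ℝ be twice differentiable with dt/ds > 0 everywhere and let r : ℝ → ℝ³ be twice differentiable (as a function of t) with |dr/dt| = c everywhere. Define q : ℝ → ℝ⁴ by q(s) = (r(t(s)), c·t(s)), and set q̇⁴(s) = c·(dt/ds)(s) > 0, v = dr/dt, and e_v = v/c. Suppose q satisfies, for all s and l = 1,2,3, the singular reduced equations (δ_{lj} − q̇^l q̇^j/Σ_p(q̇^p)²)·q̈^j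 = Σ_i q̇^i(∂φ_i/∂q^l − ∂φ_l/∂q^i) + (q̇^l q̇^i/√(Σ_p(q̇^p)²))(∂φ_i/∂q⁴ − ∂φ_4/∂q^i) + √(Σ_p(q̇^p)²)·(∂φ_4/∂q^l − ∂φ_l/∂q⁴) − ∂ψ/∂q^l − (∂ψ/∂q⁴)·q̇^l/√(Σ_p(q̇^p)²), with partial derivatives evaluated at q(s) and ∂/∂q⁴ = (1/c)∂/∂t. Then for all t in the range of t(s) it holds that q̇⁴·[e_v'(t) − ⟨e_v(t), e_v'(t)⟩·e_v(t)] = e·(e_v × (curl A) − (1/c)(∂A/∂t) − grad V + ⟨e_v, (1/c)(∂A/∂t) + grad V⟩·e_v) − (1/q̇⁴)·(c·grad ψ + (∂ψ/∂t)·e_v), with the fields evaluated at (t, r(t)). -/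
/-- Cross product on `ℝ³`. -/
def cross (u v : Fin 3 → ℝ) : Fin 3 → ℝ :=
  ![u 1 * v 2 - u 2 * v 1, u 2 * v 0 - u 0 * v 2, u 0 * v 1 - u 1 * v 0]

/-- Curl of a time-dependent vector field on `ℝ³`. -/
noncomputable def curl (A : Fin 3 → ℝ × (Fin 3 → ℝ) → ℝ) (t : ℝ) (x : Fin 3 → ℝ) :
    Fin 3 → ℝ :=
  ![pdx (A 2) 1 t x - pdx (A 1) 2 t x,
    pdx (A 0) 2 t x - pdx (A 2) 0 t x,
    pdx (A 1) 0 t x - pdx (A 0) 1 t x]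

/-- Direction of motion `e_v = v/c` of a curve moving with the speed of light. -/
noncomputable def ev (c : ℝ) (r : ℝ → Fin 3 → ℝ) (l : Fin 3) (t : ℝ) : ℝ :=
  v3 r l t / c

/-- Derivative `e_v'` of the direction of motion with respect to `t`. -/
noncomputable def evd (c : ℝ) (r : ℝ → Fin 3 → ℝ) (l : Fin 3) (t : ℝ) : ℝ :=
  deriv (fun τ => v3 r l τ / c) t

/-- Component `σ` of the velocity of a curve in `ℝ⁴`. -/
noncomputable def vel (q : ℝ → Fin 4 → ℝ) (σ : Fin 4) (s : ℝ) : ℝ :=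
  deriv (fun τ => q τ σ) s

/-- Component `σ` of the acceleration of a curve in `ℝ⁴`. -/
noncomputable def acc (q : ℝ → Fin 4 → ℝ) (σ : Fin 4) (s : ℝ) : ℝ :=
  deriv (vel q σ) s

/-! Along `q(s) = (r(T s), c·T s)` the spatial velocity is `q̇ʲ = T'·vʲ` and the acceleration is
`q̈ʲ = T'²·v'ʲ + T''·vʲ`. The coefficient matrix `δₗⱼ − q̇ˡq̇ʲ/|q̇|²` is the orthogonal projection
off `q̇`, so it annihilates the `T''` term (the reparametrisation freedom that makes the system
singular), and `|v| = c` turns `√(Σ (q̇ᵖ)²)` into `c·T' = q̇⁴`. Substituting `φ` and using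
`Σᵢ vᵢ (∂ₗAᵢ − ∂ᵢAₗ) = (v × curl A)ₗ`, the reduced equation becomes the claimed one multiplied
by `T'`.
-/

theorem pdx_const_mul (a : ℝ) (f : ℝ × (Fin 3 → ℝ) → ℝ) (i : Fin 3) (t : ℝ) (x : Fin 3 → ℝ) :
    pdx (fun p => a * f p) i t x = a * pdx f i t x := by
  have h : (fun y => a * f (t, y)) = a • fun y => f (t, y) := rfl
  rw [pdx, pdx, h, fderiv_const_smul_field]
  rfl

theorem pdt_const_mul (a : ℝ) (f : ℝ × (Fin 3 → ℝ) → ℝ) (t : ℝ) (x : Fin 3 → ℝ) :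
    pdt (fun p => a * f p) t x = a * pdt f t x :=
  deriv_const_mul_field a

theorem cross_curl_apply (w : Fin 3 → ℝ) (A : Fin 3 → ℝ × (Fin 3 → ℝ) → ℝ) (t : ℝ)
    (x : Fin 3 → ℝ) (l : Fin 3) :
    cross w (curl A t x) l = ∑ i, w i * (pdx (A i) l t x - pdx (A l) i t x) := by
  fin_cases l <;> simp [cross, curl, Fin.sum_univ_three] <;> ring

theorem sum_projection_mul {n : ℕ} (w x : Fin n → ℝ) (l : Fin n) :
    ∑ j, ((if l = j then (1 : ℝ) else 0) - w l * w j / ∑ p, w p ^ 2) * x j =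
      x l - (∑ j, w j * x j) / (∑ p, w p ^ 2) * w l := by
  simp only [sub_mul, Finset.sum_sub_distrib, ite_mul, one_mul, zero_mul,
    Finset.sum_ite_eq, Finset.mem_univ, if_true]
  congr 1
  rw [div_mul_eq_mul_div, Finset.sum_mul, Finset.sum_div]
  refine Finset.sum_congr rfl fun j _ => ?_
  ring

section Kinematics

variable {c : ℝ} {r : ℝ → Fin 3 → ℝ}

theorem v3_eq_mul_ev (hc : c ≠ 0) (l : Fin 3) (t : ℝ) : v3 r l t = c * ev c r l t := by
  rw [ev, mul_div_cancel₀ _ hc]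

theorem deriv_v3_eq_mul_evd (hc : c ≠ 0) (l : Fin 3) (t : ℝ) :
    deriv (v3 r l) t = c * evd c r l t := by
  rw [evd, deriv_div_const, mul_div_cancel₀ _ hc]

theorem sum_ev_sq_eq_one (hc : 0 < c) {t : ℝ} (hlight : √(∑ p, v3 r p t ^ 2) = c) :
    ∑ p, ev c r p t ^ 2 = 1 := by
  have hsum : ∑ p, v3 r p t ^ 2 = c ^ 2 := by
    rw [← hlight, Real.sq_sqrt (Finset.sum_nonneg fun p _ => sq_nonneg _)]
  simp only [ev, div_pow, ← Finset.sum_div, hsum]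
  exact div_self (pow_ne_zero 2 hc.ne')

variable {T : ℝ → ℝ} {q : ℝ → Fin 4 → ℝ}

theorem vel_castSucc_eq (hq : ∀ s, q s = Fin.snoc (r (T s)) (c * T s)) {j : Fin 3} {s : ℝ}
    (hr : DifferentiableAt ℝ (fun t => r t j) (T s)) (hT : DifferentiableAt ℝ T s) :
    vel q j.castSucc s = v3 r j (T s) * deriv T s := by
  have hqj : (fun σ => q σ j.castSucc) = (fun t => r t j) ∘ T := by
    funext σ
    simp [hq]
  rw [vel, hqj, deriv_comp s hr hT, v3]

theorem acc_castSucc_eq (hq : ∀ s, q s = Fin.snoc (r (T s)) (c * T s)) {j : Fin 3} {s : ℝ}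
    (hr : Differentiable ℝ fun t => r t j) (hT : Differentiable ℝ T)
    (hv : DifferentiableAt ℝ (v3 r j) (T s)) (hT' : DifferentiableAt ℝ (deriv T) s) :
    acc q j.castSucc s =
      deriv (v3 r j) (T s) * deriv T s ^ 2 + v3 r j (T s) * deriv (deriv T) s := by
  have hvel : vel q j.castSucc = fun σ => (v3 r j ∘ T) σ * deriv T σ :=
    funext fun σ => vel_castSucc_eq hq (hr _) (hT σ)
  rw [acc, hvel, deriv_fun_mul (hv.comp s (hT s)) hT', deriv_comp s hv (hT s),
    Function.comp_apply]
  ring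

end Kinematics

theorem stmt16_general (c e : ℝ) (hc : 0 < c)
    (A : Fin 3 → ℝ × (Fin 3 → ℝ) → ℝ) (V ψ : ℝ × (Fin 3 → ℝ) → ℝ)
    (φ : Fin 4 → ℝ × (Fin 3 → ℝ) → ℝ)
    (hφl : ∀ l : Fin 3, ∀ p, φ l.castSucc p = e / c * A l p)
    (hφ4 : ∀ p, φ 3 p = -(e / c) * V p)
    (T : ℝ → ℝ) (hT1 : Differentiable ℝ T) (hT2 : Differentiable ℝ (deriv T))
    (hT' : ∀ s, 0 < deriv T s)
    (r : ℝ → Fin 3 → ℝ)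
    (hr1 : ∀ l, Differentiable ℝ fun t => r t l)
    (hr2 : ∀ l, Differentiable ℝ (v3 r l))
    (hlight : ∀ t, Real.sqrt (∑ p, v3 r p t ^ 2) = c)
    (q : ℝ → Fin 4 → ℝ)
    (hq : ∀ s, q s = Fin.snoc (r (T s)) (c * T s))
    (hred : ∀ s, ∀ l : Fin 3,
      (∑ j : Fin 3,
        ((if l = j then (1 : ℝ) else 0)
            - vel q l.castSucc s * vel q j.castSucc s /
                (∑ p : Fin 3, vel q p.castSucc s ^ 2)) * acc q j.castSucc s) =
        (∑ i : Fin 3, vel q i.castSucc s *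
            (pdx (φ i.castSucc) l (T s) (r (T s))
              - pdx (φ l.castSucc) i (T s) (r (T s))))
        + (∑ i : Fin 3,
            vel q l.castSucc s * vel q i.castSucc s /
                Real.sqrt (∑ p : Fin 3, vel q p.castSucc s ^ 2) *
              ((1 / c) * pdt (φ i.castSucc) (T s) (r (T s))
                - pdx (φ 3) i (T s) (r (T s))))
        + Real.sqrt (∑ p : Fin 3, vel q p.castSucc s ^ 2) *
            (pdx (φ 3) l (T s) (r (T s))
              - (1 / c) * pdt (φ l.castSucc) (T s) (r (T s)))
        - pdx ψ l (T s) (r (T s))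
        - (1 / c) * pdt ψ (T s) (r (T s)) * vel q l.castSucc s /
            Real.sqrt (∑ p : Fin 3, vel q p.castSucc s ^ 2)) :
    ∀ s, ∀ l : Fin 3,
      (c * deriv T s) *
          (evd c r l (T s)
            - (∑ i, ev c r i (T s) * evd c r i (T s)) * ev c r l (T s)) =
        e * (cross (fun i => ev c r i (T s)) (curl A (T s) (r (T s))) l
            - (1 / c) * pdt (A l) (T s) (r (T s))
            - pdx V l (T s) (r (T s))
            + (∑ i, ev c r i (T s) *
                ((1 / c) * pdt (A i) (T s) (r (T s))
                  + pdx V i (T s) (r (T s)))) * ev c r l (T s))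
        - (1 / (c * deriv T s)) *
            (c * pdx ψ l (T s) (r (T s))
              + pdt ψ (T s) (r (T s)) * ev c r l (T s)) := by
  intro s l
  have hc0 : c ≠ 0 := hc.ne'
  have hd : deriv T s ≠ 0 := (hT' s).ne'
  have hk : 0 < c * deriv T s := mul_pos hc (hT' s)
  have hvel : ∀ j, vel q j.castSucc s = c * deriv T s * ev c r j (T s) := fun j => by
    rw [vel_castSucc_eq hq (hr1 j _) (hT1 s), v3_eq_mul_ev hc0]
    ring
  have hacc : ∀ j, acc q j.castSucc s =
      c * deriv T s ^ 2 * evd c r j (T s) + c * deriv (deriv T) s * ev c r j (T s) := fun j => by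
    rw [acc_castSucc_eq hq (hr1 j) hT1 (hr2 j _) (hT2 s), v3_eq_mul_ev hc0,
      deriv_v3_eq_mul_evd hc0]
    ring
  have hunit := sum_ev_sq_eq_one hc (hlight (T s))
  have hnorm : ∑ p : Fin 3, vel q p.castSucc s ^ 2 = (c * deriv T s) ^ 2 := by
    simp only [hvel, mul_pow, ← Finset.mul_sum, hunit, mul_one]
  have hφA : ∀ i, φ i.castSucc = fun p => e / c * A i p := fun i => funext (hφl i)
  have hφV : φ 3 = fun p => -(e / c) * V p := funext hφ4
  have key := hred s l
  rw [sum_projection_mul (fun p => vel q p.castSucc s) (fun j => acc q j.castSucc s) l, hnorm,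
    Real.sqrt_sq hk.le] at key
  simp only [hvel, hacc, hφA, hφV, pdx_const_mul, pdt_const_mul] at key
  rw [cross_curl_apply]
  simp only [Fin.sum_univ_three] at key hunit ⊢
  linear_combination (norm := (field_simp; ring)) key / deriv T s
    + c * deriv (deriv T) s * ev c r l (T s) / deriv T s * hunit

/-- if the curve `q(s) = (r(t(s)), c·t(s))`, moving with the speed
of light, satisfies the singular reduced equations of a massless particle, then
at every `t = T(s)` in the range of `T` (where `q̇⁴ = c·T'(s)`) the
three-dimensional massless equations of motion
`q̇⁴[e_v' − ⟨e_v,e_v'⟩e_v] = e(e_v × curl A − (1/c)∂A/∂t − grad V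
+ ⟨e_v,(1/c)∂A/∂t + grad V⟩e_v) − (1/q̇⁴)(c·grad ψ + (∂ψ/∂t)e_v)` hold. -/
theorem stmt16 (c e : ℝ) (hc : 0 < c)
    (A : Fin 3 → ℝ × (Fin 3 → ℝ) → ℝ) (V ψ : ℝ × (Fin 3 → ℝ) → ℝ)
    (hA : ∀ l, ContDiff ℝ 1 (A l)) (hV : ContDiff ℝ 1 V) (hψ : ContDiff ℝ 1 ψ)
    (φ : Fin 4 → ℝ × (Fin 3 → ℝ) → ℝ)
    (hφl : ∀ l : Fin 3, ∀ p, φ l.castSucc p = e / c * A l p)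
    (hφ4 : ∀ p, φ 3 p = -(e / c) * V p)
    (T : ℝ → ℝ) (hT1 : Differentiable ℝ T) (hT2 : Differentiable ℝ (deriv T))
    (hT' : ∀ s, 0 < deriv T s)
    (r : ℝ → Fin 3 → ℝ)
    (hr1 : ∀ l, Differentiable ℝ fun t => r t l)
    (hr2 : ∀ l, Differentiable ℝ (v3 r l))
    (hlight : ∀ t, Real.sqrt (∑ p, v3 r p t ^ 2) = c)
    (q : ℝ → Fin 4 → ℝ)
    (hq : ∀ s, q s = Fin.snoc (r (T s)) (c * T s))
    (hred : ∀ s, ∀ l : Fin 3,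
      (∑ j : Fin 3,
        ((if l = j then (1 : ℝ) else 0)
            - vel q l.castSucc s * vel q j.castSucc s /
                (∑ p : Fin 3, vel q p.castSucc s ^ 2)) * acc q j.castSucc s) =
        (∑ i : Fin 3, vel q i.castSucc s *
            (pdx (φ i.castSucc) l (T s) (r (T s))
              - pdx (φ l.castSucc) i (T s) (r (T s))))
        + (∑ i : Fin 3,
            vel q l.castSucc s * vel q i.castSucc s /
                Real.sqrt (∑ p : Fin 3, vel q p.castSucc s ^ 2) *
              ((1 / c) * pdt (φ i.castSucc) (T s) (r (T s))
                - pdx (φ 3) i (T s) (r (T s))))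
        + Real.sqrt (∑ p : Fin 3, vel q p.castSucc s ^ 2) *
            (pdx (φ 3) l (T s) (r (T s))
              - (1 / c) * pdt (φ l.castSucc) (T s) (r (T s)))
        - pdx ψ l (T s) (r (T s))
        - (1 / c) * pdt ψ (T s) (r (T s)) * vel q l.castSucc s /
            Real.sqrt (∑ p : Fin 3, vel q p.castSucc s ^ 2)) :
    ∀ s, ∀ l : Fin 3,
      (c * deriv T s) *
          (evd c r l (T s)
            - (∑ i, ev c r i (T s) * evd c r i (T s)) * ev c r l (T s)) =
        e * (cross (fun i => ev c r i (T s)) (curl A (T s) (r (T s))) l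
            - (1 / c) * pdt (A l) (T s) (r (T s))
            - pdx V l (T s) (r (T s))
            + (∑ i, ev c r i (T s) *
                ((1 / c) * pdt (A i) (T s) (r (T s))
                  + pdx V i (T s) (r (T s)))) * ev c r l (T s))
        - (1 / (c * deriv T s)) *
            (c * pdx ψ l (T s) (r (T s))
              + pdt ψ (T s) (r (T s)) * ev c r l (T s)) :=
  stmt16_general c e hc A V ψ φ hφl hφ4 T hT1 hT2 hT' r hr1 hr2 hlight q hq hred
end
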